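/- Optimal causal eavesdropper incurs the normalized equivocation: let α and β be finite types, n a positive natural number, and p a joint probability mass function on β × (Fin n → α) for a message M and source sequence X^n = (X₁,…,Xₙ). The infimum, over all families of functions z_i : β × (Fin (i−1) → α) → (probability mass functions on α) for i = 1,…,n with z_i(m, x^{i−1})(x_i) > 0 whenever the corresponding joint probability is positive, of the time-averaged expected log-loss (1/n) ∑_{i=1}^{n} E[ log( 1 / z_i(M, X^{i−1})(X_i) ) ] equals (1/n)·H(X^n | M), and it is attained by the posterior choices z_i(m, x^{i−1})(x) = P(X_i = x | M = m, X^{i−1} = x^{i−1}). -/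

import Mathlib

/-!
The eavesdropper's loss splits over time steps, and at step `i` over contexts
`(m, x^{i-1})`. In each context the expected log-loss of a prediction `z` is a cross-entropy
against the posterior of `X_i`, so by Gibbs' inequality the posterior is optimal. For the
posterior the per-step losses `log (P(m, x^{i-1}) / P(m, x^i))` telescope along each sample
to `log (P(m) / P(m, x^n))`, whose expectation is `H(X^n | M)`.
-/

open scoped Classical NNReal BigOperators

/-- The pushforward (marginal) of a pmf `p` on a finite type `σ` along `f : σ → τ`. -/
noncomputable def push {σ τ : Type*} [Fintype σ] (p : σ → ℝ≥0) (f : σ → τ) (t : τ) : ℝ≥0 :=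
  ∑ s ∈ Finset.univ.filter (fun s => f s = t), p s

/-- Conditional entropy `H(V | W)` of the first coordinate given the second, for a
joint pmf `q` on `V × W` (natural logarithm, terms with `q (v, w) = 0` contribute 0). -/
noncomputable def condEnt {V W : Type*} [Fintype V] [Fintype W] (q : V × W → ℝ≥0) : ℝ :=
  -∑ vw : V × W, (q vw : ℝ) * Real.log ((q vw : ℝ) / ∑ v, (q (v, vw.2) : ℝ))

/-- The prefix `X^{i-1} = (X₁, …, X_{i-1})` of a source sequence. -/
def prefixOf {α : Type*} {n : ℕ} (x : Fin n → α) (i : Fin n) : Fin i.val → α :=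
  fun j : Fin i.val => x ⟨j.val, j.isLt.trans i.isLt⟩

open Real

theorem sum_mul_log_inv_le_sum_mul_log_inv {ι : Type*} [Fintype ι] {q r : ι → ℝ}
    (hq : ∀ x, 0 ≤ q x) (hr : ∀ x, 0 ≤ r x) (hqr : ∀ x, 0 < q x → 0 < r x)
    (hsum : ∑ x, r x ≤ ∑ x, q x) :
    ∑ x, q x * log (1 / q x) ≤ ∑ x, q x * log (1 / r x) := by
  have hterm : ∀ x, q x - r x ≤ q x * log (1 / r x) - q x * log (1 / q x) := by
    intro x
    rcases (hq x).eq_or_lt with h | h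
    · simp [← h, hr x]
    · have hlog := mul_le_mul_of_nonneg_left (log_le_sub_one_of_pos (div_pos (hqr x h) h)) h.le
      rw [log_div (hqr x h).ne' h.ne', mul_sub_one, mul_div_cancel₀ _ h.ne'] at hlog
      simp only [one_div, log_inv]
      linarith
  have := Finset.sum_le_sum fun x (_ : x ∈ Finset.univ) => hterm x
  rw [Finset.sum_sub_distrib, Finset.sum_sub_distrib] at this
  linarith

section Push

variable {σ τ α : Type*} [Fintype σ]

lemma sum_mul_comp_eq_sum_push [Fintype τ] (p : σ → ℝ≥0) (f : σ → τ) (c : τ → ℝ) :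
    ∑ s, (p s : ℝ) * c (f s) = ∑ t, (push p f t : ℝ) * c t := by
  rw [← Finset.sum_fiberwise Finset.univ f]
  refine Finset.sum_congr rfl fun t _ => ?_
  rw [push, NNReal.coe_sum, Finset.sum_mul]
  exact Finset.sum_congr rfl fun s hs => by rw [(Finset.mem_filter.mp hs).2]

lemma sum_push_prodMk [Fintype α] (p : σ → ℝ≥0) (g : σ → α) (f : σ → τ) (t : τ) :
    ∑ x, push p (fun s => (g s, f s)) (x, t) = push p f t := by
  simp only [push, Finset.sum_filter, Prod.mk.injEq]
  rw [Finset.sum_comm]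
  refine Finset.sum_congr rfl fun s _ => ?_
  by_cases h : f s = t <;> simp [h]

lemma push_prodMk_le [Fintype α] (p : σ → ℝ≥0) (g : σ → α) (f : σ → τ) (x : α) (t : τ) :
    push p (fun s => (g s, f s)) (x, t) ≤ push p f t :=
  sum_push_prodMk p g f t ▸
    Finset.single_le_sum (f := fun y => push p (fun s => (g s, f s)) (y, t)) (fun _ _ => zero_le)
      (Finset.mem_univ x)

lemma push_apply_of_injective (p : σ → ℝ≥0) {f : σ → τ} (hf : Function.Injective f) (s : σ) :
    push p f (f s) = p s := by
  rw [push, Finset.sum_eq_single_of_mem s (by simp)]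
  intro s' hs' hne
  exact absurd (hf (Finset.mem_filter.mp hs').2) hne

end Push

section Posterior

variable {σ τ α : Type*} [Fintype σ] [Fintype α]

-- Off the support of `f` any pmf would do; the uniform one keeps `posterior` a pmf.
noncomputable def posterior (p : σ → ℝ≥0) (g : σ → α) (f : σ → τ) (t : τ) (x : α) : ℝ≥0 :=
  if push p f t = 0 then (Fintype.card α : ℝ≥0)⁻¹
  else push p (fun s => (g s, f s)) (x, t) / push p f t

variable (p : σ → ℝ≥0) (g : σ → α) (f : σ → τ)

lemma posterior_of_pos {t : τ} (ht : 0 < push p f t) (x : α) :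
    posterior p g f t x = push p (fun s => (g s, f s)) (x, t) / push p f t :=
  if_neg ht.ne'

lemma push_prodMk_eq_mul_posterior (t : τ) (x : α) :
    push p (fun s => (g s, f s)) (x, t) = push p f t * posterior p g f t x := by
  by_cases ht : push p f t = 0
  · rw [ht, zero_mul, ← nonpos_iff_eq_zero, ← ht]
    exact push_prodMk_le p g f x t
  · rw [posterior, if_neg ht, mul_div_cancel₀ _ ht]

lemma posterior_pos {t : τ} {x : α} (h : 0 < push p (fun s => (g s, f s)) (x, t)) :
    0 < posterior p g f t x := by
  rw [push_prodMk_eq_mul_posterior] at h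
  exact pos_of_mul_pos_right h zero_le

lemma sum_posterior_of_pos {t : τ} (ht : 0 < push p f t) : ∑ x, posterior p g f t x = 1 := by
  simp only [posterior_of_pos p g f ht, ← Finset.sum_div, sum_push_prodMk, div_self ht.ne']

lemma sum_posterior [Nonempty α] (t : τ) : ∑ x, posterior p g f t x = 1 := by
  rcases eq_zero_or_pos (push p f t) with ht | ht
  · simp [posterior, ht]
  · exact sum_posterior_of_pos p g f ht

theorem sum_mul_log_inv_posterior_le [Fintype τ] (z : τ → α → ℝ≥0)
    (hz_sum : ∀ t, ∑ x, z t x ≤ 1)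
    (hz_pos : ∀ x t, 0 < push p (fun s => (g s, f s)) (x, t) → 0 < z t x) :
    ∑ s, (p s : ℝ) * log (1 / posterior p g f (f s) (g s)) ≤
      ∑ s, (p s : ℝ) * log (1 / z (f s) (g s)) := by
  rw [sum_mul_comp_eq_sum_push p (fun s => (g s, f s))
      fun xt => log (1 / posterior p g f xt.2 xt.1),
    sum_mul_comp_eq_sum_push p (fun s => (g s, f s)) fun xt => log (1 / z xt.2 xt.1),
    Fintype.sum_prod_type_right, Fintype.sum_prod_type_right]
  refine Finset.sum_le_sum fun t _ => ?_
  simp only [push_prodMk_eq_mul_posterior p g f t, NNReal.coe_mul, mul_assoc, ← Finset.mul_sum]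
  rcases eq_zero_or_pos (push p f t) with ht | ht
  · simp [ht]
  refine mul_le_mul_of_nonneg_left (sum_mul_log_inv_le_sum_mul_log_inv
    (fun _ => NNReal.coe_nonneg _) (fun _ => NNReal.coe_nonneg _) (fun x hx => ?_) ?_)
    (NNReal.coe_nonneg _)
  · refine NNReal.coe_pos.mpr (hz_pos x t ?_)
    rw [push_prodMk_eq_mul_posterior]
    exact mul_pos ht (NNReal.coe_pos.mp hx)
  · exact_mod_cast (hz_sum t).trans (sum_posterior_of_pos p g f ht).ge

end Posterior

lemma condEnt_push_swap {β γ : Type*} [Fintype β] [Fintype γ] (p : β × γ → ℝ≥0) :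
    condEnt (push p (fun w => (w.2, w.1))) =
      ∑ w, (p w : ℝ) * (log (push p Prod.fst w.1) - log (p w)) := by
  rw [condEnt, ← Finset.sum_neg_distrib]
  refine Fintype.sum_equiv (Equiv.prodComm γ β) _ _ fun ⟨x, m⟩ => ?_
  have hswap : push p (fun w => (w.2, w.1)) (x, m) = p (m, x) :=
    push_apply_of_injective p Prod.swap_injective (m, x)
  have hmarg : ∑ v, (push p (fun w => (w.2, w.1)) (v, m) : ℝ) = push p Prod.fst m := by
    exact_mod_cast sum_push_prodMk p Prod.snd Prod.fst m
  simp only [Equiv.prodComm_apply, Prod.swap_prod_mk, hswap, hmarg]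
  rcases eq_zero_or_pos (p (m, x)) with h | h
  · simp [h]
  · have hm : p (m, x) ≤ push p Prod.fst m :=
      Finset.single_le_sum (fun _ _ => zero_le) (by simp)
    rw [log_div (NNReal.coe_pos.mpr h).ne' (NNReal.coe_pos.mpr (h.trans_le hm)).ne']
    ring

section Prefix

variable {α β : Type*} {n : ℕ}

lemma prefixOf_eq_prefixOf_iff (x y : Fin n → α) (i : Fin n) :
    prefixOf x i = prefixOf y i ↔ ∀ j : Fin n, j < i → x j = y j :=
  ⟨fun h j hj => congrFun h ⟨j, hj⟩, fun h => funext fun j => h _ j.isLt⟩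

variable [Fintype α] [Fintype β]

/-- The mass of `{M = m, X^k = x^k}` for `w = (m, x)`. Indexing by `k : ℕ` rather than by a
`Fin` keeps the telescoping below free of casts. -/
noncomputable def prefixMass (p : β × (Fin n → α) → ℝ≥0) (w : β × (Fin n → α)) (k : ℕ) : ℝ≥0 :=
  ∑ w' ∈ Finset.univ.filter (fun w' => w'.1 = w.1 ∧ ∀ j : Fin n, (j : ℕ) < k → w'.2 j = w.2 j), p w'

variable (p : β × (Fin n → α) → ℝ≥0) (w : β × (Fin n → α))

lemma le_prefixMass (k : ℕ) : p w ≤ prefixMass p w k :=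
  Finset.single_le_sum (fun _ _ => zero_le) (by simp)

lemma prefixMass_zero : prefixMass p w 0 = push p Prod.fst w.1 := by
  simp [prefixMass, push]

lemma prefixMass_self : prefixMass p w n = p w := by
  rw [prefixMass, Finset.sum_eq_single_of_mem w (by simp)]
  intro w' hw' hne
  simp only [Finset.mem_filter, Finset.mem_univ, true_and, Fin.is_lt, forall_const] at hw'
  exact absurd (Prod.ext hw'.1 (funext hw'.2)) hne

lemma push_prefix_eq_prefixMass (i : Fin n) :
    push p (fun w' => (w'.1, prefixOf w'.2 i)) (w.1, prefixOf w.2 i) = prefixMass p w i := by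
  simp only [push, prefixMass, Prod.mk.injEq, prefixOf_eq_prefixOf_iff, Fin.lt_def]

lemma push_next_prefix_eq_prefixMass_succ (i : Fin n) :
    push p (fun w' => (w'.2 i, (w'.1, prefixOf w'.2 i))) (w.2 i, (w.1, prefixOf w.2 i)) =
      prefixMass p w (i + 1) := by
  simp only [push, prefixMass, Prod.mk.injEq, prefixOf_eq_prefixOf_iff, Fin.lt_def,
    Nat.lt_succ_iff_lt_or_eq, or_imp, forall_and, Fin.val_inj, forall_eq]
  congr 1
  ext w'
  simp only [Finset.mem_filter]
  tauto

noncomputable def causalPosterior (i : Fin n) : β × (Fin i.val → α) → α → ℝ≥0 :=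
  posterior p (fun w => w.2 i) (fun w => (w.1, prefixOf w.2 i))

lemma sum_log_inv_causalPosterior (hw : 0 < p w) :
    ∑ i : Fin n, log (1 / causalPosterior p i (w.1, prefixOf w.2 i) (w.2 i)) =
      log (push p Prod.fst w.1) - log (p w) := by
  have hmass : ∀ k, (0 : ℝ) < prefixMass p w k := fun k =>
    NNReal.coe_pos.mpr (hw.trans_le (le_prefixMass p w k))
  have hstep : ∀ i : Fin n, log (1 / causalPosterior p i (w.1, prefixOf w.2 i) (w.2 i)) =
      log (prefixMass p w i) - log (prefixMass p w (i + 1)) := by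
    intro i
    have hctx := push_prefix_eq_prefixMass p w i
    rw [causalPosterior, posterior_of_pos _ _ _ (hctx ▸ NNReal.coe_pos.mp (hmass i)), hctx,
      push_next_prefix_eq_prefixMass_succ, NNReal.coe_div, one_div_div,
      log_div (hmass i).ne' (hmass (i + 1)).ne']
  rw [Fintype.sum_congr _ _ hstep,
    Fin.sum_univ_eq_sum_range (fun k => log (prefixMass p w k) - log (prefixMass p w (k + 1))),
    Finset.sum_range_sub', prefixMass_zero, prefixMass_self]

theorem sum_sum_mul_log_inv_causalPosterior :
    ∑ i : Fin n, ∑ w, (p w : ℝ) * log (1 / causalPosterior p i (w.1, prefixOf w.2 i) (w.2 i)) =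
      condEnt (push p (fun w => (w.2, w.1))) := by
  rw [Finset.sum_comm, condEnt_push_swap]
  refine Finset.sum_congr rfl fun w _ => ?_
  rcases eq_zero_or_pos (p w) with hw | hw
  · simp [hw]
  · rw [← Finset.mul_sum, sum_log_inv_causalPosterior p w hw]

end Prefix

theorem optimal_causal_eavesdropper_general (α β : Type*) [Fintype α] [Fintype β] (n : ℕ)
    (p : β × (Fin n → α) → ℝ≥0) (hp : ∑ w, p w = 1) :
    IsLeast
      { L : ℝ | ∃ z : (i : Fin n) → β × (Fin i.val → α) → α → ℝ≥0,
          (∀ (i : Fin n) (mu : β × (Fin i.val → α)), ∑ x, z i mu x = 1) ∧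
          (∀ (i : Fin n) (x : α) (mu : β × (Fin i.val → α)),
            0 < push p (fun w : β × (Fin n → α) =>
                (w.2 i, (w.1, prefixOf w.2 i))) (x, mu) →
            0 < z i mu x) ∧
          L = (1 / (n : ℝ)) * ∑ i : Fin n, ∑ w : β × (Fin n → α),
                (p w : ℝ) * Real.log (1 / (z i (w.1, prefixOf w.2 i) (w.2 i) : ℝ)) }
      ((1 / (n : ℝ)) * condEnt (push p (fun w : β × (Fin n → α) => (w.2, w.1)))) ∧
    ∃ z : (i : Fin n) → β × (Fin i.val → α) → α → ℝ≥0,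
      (∀ (i : Fin n) (mu : β × (Fin i.val → α)), ∑ x, z i mu x = 1) ∧
      (∀ (i : Fin n) (x : α) (mu : β × (Fin i.val → α)),
        0 < push p (fun w : β × (Fin n → α) =>
            (w.2 i, (w.1, prefixOf w.2 i))) (x, mu) →
        0 < z i mu x) ∧
      (∀ (i : Fin n) (mu : β × (Fin i.val → α)),
        0 < push p (fun w : β × (Fin n → α) => (w.1, prefixOf w.2 i)) mu →
        ∀ x : α,
          z i mu x =
            push p (fun w : β × (Fin n → α) => (w.2 i, (w.1, prefixOf w.2 i))) (x, mu) /
              push p (fun w : β × (Fin n → α) => (w.1, prefixOf w.2 i)) mu) ∧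
      (1 / (n : ℝ)) * ∑ i : Fin n, ∑ w : β × (Fin n → α),
          (p w : ℝ) * Real.log (1 / (z i (w.1, prefixOf w.2 i) (w.2 i) : ℝ)) =
        (1 / (n : ℝ)) * condEnt (push p (fun w : β × (Fin n → α) => (w.2, w.1))) := by
  have hα : Fin n → Nonempty α := fun i => by
    obtain ⟨w, -, -⟩ := Finset.exists_ne_zero_of_sum_ne_zero (hp ▸ one_ne_zero : ∑ w, p w ≠ 0)
    exact ⟨w.2 i⟩
  have hsum : ∀ i mu, ∑ x, causalPosterior p i mu x = 1 := fun i mu =>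
    have := hα i
    sum_posterior p _ _ mu
  have hpos : ∀ i x mu, 0 < push p (fun w : β × (Fin n → α) => (w.2 i, (w.1, prefixOf w.2 i)))
      (x, mu) → 0 < causalPosterior p i mu x := fun i _ _ => posterior_pos p _ _
  have hloss := sum_sum_mul_log_inv_causalPosterior p
  refine ⟨⟨⟨causalPosterior p, hsum, hpos, by rw [hloss]⟩, ?_⟩,
    causalPosterior p, hsum, hpos, fun i _ hmu => posterior_of_pos p _ _ hmu, by rw [hloss]⟩
  rintro L ⟨z, hz_sum, hz_pos, rfl⟩
  rw [← hloss]
  refine mul_le_mul_of_nonneg_left (Finset.sum_le_sum fun i _ => ?_) (by positivity)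
  exact sum_mul_log_inv_posterior_le p _ _ (z i) (fun mu => (hz_sum i mu).le) (hz_pos i)

/-- **Optimal causal eavesdropper incurs the normalized equivocation**: for a message
`M` valued in `β` and a source sequence `X^n` valued in `Fin n → α` with joint pmf `p`,
the minimal time-averaged expected log-loss over all causal eavesdropper strategies
`z i : β × (Fin i → α) → pmf on α` (positive wherever the corresponding joint
probability is positive) equals `(1 / n) * H(X^n | M)`, and it is attained by the
posterior choices `z i (m, x^{i-1}) x = P(X_i = x | M = m, X^{i-1} = x^{i-1})`. -/
theorem optimal_causal_eavesdropper (α β : Type*) [Fintype α] [Fintype β] (n : ℕ)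
    (hn : 0 < n) (p : β × (Fin n → α) → ℝ≥0) (hp : ∑ w, p w = 1) :
    IsLeast
      { L : ℝ | ∃ z : (i : Fin n) → β × (Fin i.val → α) → α → ℝ≥0,
          (∀ (i : Fin n) (mu : β × (Fin i.val → α)), ∑ x, z i mu x = 1) ∧
          (∀ (i : Fin n) (x : α) (mu : β × (Fin i.val → α)),
            0 < push p (fun w : β × (Fin n → α) =>
                (w.2 i, (w.1, prefixOf w.2 i))) (x, mu) →
            0 < z i mu x) ∧
          L = (1 / (n : ℝ)) * ∑ i : Fin n, ∑ w : β × (Fin n → α),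
                (p w : ℝ) * Real.log (1 / (z i (w.1, prefixOf w.2 i) (w.2 i) : ℝ)) }
      ((1 / (n : ℝ)) * condEnt (push p (fun w : β × (Fin n → α) => (w.2, w.1)))) ∧
    ∃ z : (i : Fin n) → β × (Fin i.val → α) → α → ℝ≥0,
      (∀ (i : Fin n) (mu : β × (Fin i.val → α)), ∑ x, z i mu x = 1) ∧
      (∀ (i : Fin n) (x : α) (mu : β × (Fin i.val → α)),
        0 < push p (fun w : β × (Fin n → α) =>
            (w.2 i, (w.1, prefixOf w.2 i))) (x, mu) →
        0 < z i mu x) ∧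
      (∀ (i : Fin n) (mu : β × (Fin i.val → α)),
        0 < push p (fun w : β × (Fin n → α) => (w.1, prefixOf w.2 i)) mu →
        ∀ x : α,
          z i mu x =
            push p (fun w : β × (Fin n → α) => (w.2 i, (w.1, prefixOf w.2 i))) (x, mu) /
              push p (fun w : β × (Fin n → α) => (w.1, prefixOf w.2 i)) mu) ∧
      (1 / (n : ℝ)) * ∑ i : Fin n, ∑ w : β × (Fin n → α),
          (p w : ℝ) * Real.log (1 / (z i (w.1, prefixOf w.2 i) (w.2 i) : ℝ)) =
        (1 / (n : ℝ)) * condEnt (push p (fun w : β × (Fin n → α) => (w.2, w.1))) :=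
  optimal_causal_eavesdropper_general α β n p hp
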